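/- Let t_r > 0 and let λ : ℝ → ℝ be a continuous, nonnegative function that is periodic with period t_r. Set Λ := ∫₀^{t_r} λ(τ) dτ and assume Λ > 0. Let x_d ∈ [0, t_r). For x, x' ∈ [0, t_r), define the transition kernel k(x' | x) := λ(x') / (1 − exp(−Λ)) · exp(−∫_{x + x_d}^{u(x, x')} λ(τ) dτ), where u(x, x') := ⌈(x + x_d − x') / t_r⌉ · t_r + x' and ⌈a⌉ := ⌊a⌋ + 1. Then for every x ∈ [0, t_r), ∫₀^{t_r} k(x' | x) dx' = 1; that is, k(· | x) is a probability density on [0, t_r). -/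

import Mathlib

/-!
The substitution `x' ↦ u(x, x')` is `toIocMod t_r (x + x_d)`: it sends `x'` to its unique
representative modulo `t_r` in `(x + x_d, x + x_d + t_r]`. By periodicity of `λ`, the
numerator `λ(x')` equals `λ(u)`, so the integrand is `g ∘ u` with
`g(u) = λ(u) exp(-∫_{x+x_d}^u λ)`. Integrating a function of `toIocMod` over one period is
integrating the function itself over the target period, and `g` is the derivative of
`-exp(-∫_{x+x_d}^u λ)`, so the integral is `1 - exp(-Λ)`.
-/

open intervalIntegral

theorem toIocMod_eq_floor_add_one_mul_add {α : Type*} [Field α] [LinearOrder α]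
    [IsStrictOrderedRing α] [FloorRing α] {p : α} (hp : 0 < p) (a b : α) :
    toIocMod hp a b = ((⌊(a - b) / p⌋ : α) + 1) * p + b := by
  have hfloor : ⌊(a + p - b) / p⌋ = ⌊(a - b) / p⌋ + 1 := by
    rw [add_sub_right_comm, add_div, div_self hp.ne', Int.floor_add_one]
  rw [← self_sub_toIocDiv_zsmul, toIocDiv_eq_neg_floor, hfloor, zsmul_eq_mul]
  push_cast
  ring

theorem Function.Periodic.comp_toIocMod {α β : Type*} [AddCommGroup α] [LinearOrder α]
    [IsOrderedAddMonoid α] [Archimedean α] {f : α → β} {T : α}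
    (hf : Function.Periodic f T) (hT : 0 < T) (a b : α) :
    f (toIocMod hT a b) = f b := by
  rw [← self_sub_toIocDiv_zsmul]
  exact hf.sub_zsmul_eq _

theorem intervalIntegral.integral_comp_toIocMod {E : Type*} [NormedAddCommGroup E]
    [NormedSpace ℝ E] (g : ℝ → E) {T : ℝ} (hT : 0 < T) (a t : ℝ) :
    ∫ y in t..t + T, g (toIocMod hT a y) = ∫ y in a..a + T, g y := by
  have hperiodic : Function.Periodic (fun y => g (toIocMod hT a y)) T :=
    fun y => by simp only [toIocMod_add_right]
  rw [hperiodic.intervalIntegral_add_eq t a]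
  refine integral_congr_ae (Filter.Eventually.of_forall fun y hy => ?_)
  rw [Set.uIoc_of_le (le_add_of_nonneg_right hT.le)] at hy
  rw [(toIocMod_eq_self hT).2 hy]

theorem intervalIntegral.integral_mul_exp_neg_integral {f : ℝ → ℝ} (hf : Continuous f)
    (s a b : ℝ) :
    ∫ y in a..b, f y * Real.exp (-∫ τ in s..y, f τ) =
      Real.exp (-∫ τ in s..a, f τ) - Real.exp (-∫ τ in s..b, f τ) := by
  have hderiv : ∀ y, HasDerivAt (fun u => -Real.exp (-∫ τ in s..u, f τ))
      (f y * Real.exp (-∫ τ in s..y, f τ)) y := fun y => by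
    have hchain : HasDerivAt (fun u => -Real.exp (-∫ τ in s..u, f τ))
        (-(Real.exp (-∫ τ in s..y, f τ) * -f y)) y :=
      ((hf.integral_hasStrictDerivAt s y).hasDerivAt.neg.exp).neg
    convert hchain using 1
    ring
  have hcont : Continuous fun y => f y * Real.exp (-∫ τ in s..y, f τ) :=
    hf.mul (continuous_primitive hf.intervalIntegrable s).neg.rexp
  rw [integral_eq_sub_of_hasDerivAt (fun y _ => hderiv y) (hcont.intervalIntegrable a b)]
  ring

theorem transition_kernel_integrates_to_one_general
    (tr : ℝ) (htr : 0 < tr) (lam : ℝ → ℝ) (hcont : Continuous lam)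
    (hper : Function.Periodic lam tr)
    (Λ : ℝ) (hΛdef : Λ = ∫ τ in (0 : ℝ)..tr, lam τ) (hΛ : 0 < Λ)
    (xd : ℝ) :
    ∀ x ∈ Set.Ico (0 : ℝ) tr,
      (∫ x' in (0 : ℝ)..tr,
          lam x' / (1 - Real.exp (-Λ)) *
            Real.exp (-(∫ τ in (x + xd)..(((⌊(x + xd - x') / tr⌋ : ℝ) + 1) * tr + x'),
              lam τ)))
        = 1 := by
  intro x _
  set s := x + xd
  set g : ℝ → ℝ := fun u => lam u * Real.exp (-∫ τ in s..u, lam τ)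
  have hkernel : ∀ x', lam x' / (1 - Real.exp (-Λ)) *
      Real.exp (-(∫ τ in s..(((⌊(s - x') / tr⌋ : ℝ) + 1) * tr + x'), lam τ)) =
      (1 - Real.exp (-Λ))⁻¹ * g (toIocMod htr s x') := fun x' => by
    rw [← toIocMod_eq_floor_add_one_mul_add htr, ← hper.comp_toIocMod htr s x']
    ring
  have hperiod : ∫ τ in s..s + tr, lam τ = Λ := by
    rw [hper.intervalIntegral_add_eq s 0, zero_add, hΛdef]
  have hnorm : 1 - Real.exp (-Λ) ≠ 0 :=
    (sub_pos.2 (Real.exp_lt_one_iff.2 (neg_neg_of_pos hΛ))).ne'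
  have hunwrap : ∫ x' in (0 : ℝ)..tr, g (toIocMod htr s x') = ∫ u in s..s + tr, g u := by
    simpa using integral_comp_toIocMod g htr s 0
  simp_rw [hkernel]
  rw [integral_const_mul, hunwrap, integral_mul_exp_neg_integral hcont, integral_same,
    hperiod, neg_zero, Real.exp_zero, inv_mul_cancel₀ hnorm]

/-- The Markov transition kernel of detection times modulo the repetition period
(Proposition 1 of the paper) is a probability density: it integrates to 1 over
one period. Here `u(x,x') = ⌈(x + x_d − x')/t_r⌉·t_r + x'` with `⌈a⌉ := ⌊a⌋ + 1`. -/
theorem transition_kernel_integrates_to_one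
    (tr : ℝ) (htr : 0 < tr) (lam : ℝ → ℝ) (hcont : Continuous lam)
    (hnn : ∀ t, 0 ≤ lam t) (hper : Function.Periodic lam tr)
    (Λ : ℝ) (hΛdef : Λ = ∫ τ in (0 : ℝ)..tr, lam τ) (hΛ : 0 < Λ)
    (xd : ℝ) (hxd : xd ∈ Set.Ico (0 : ℝ) tr) :
    ∀ x ∈ Set.Ico (0 : ℝ) tr,
      (∫ x' in (0 : ℝ)..tr,
          lam x' / (1 - Real.exp (-Λ)) *
            Real.exp (-(∫ τ in (x + xd)..(((⌊(x + xd - x') / tr⌋ : ℝ) + 1) * tr + x'),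
              lam τ)))
        = 1 :=
  transition_kernel_integrates_to_one_general tr htr lam hcont hper Λ hΛdef hΛ xd
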